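/- Let G be a finite group and M = (D, σ, α) a connected combinatorial map with dual map M* = (D, σ∘α, α). (i) For every G-flow κ on M there exists a minimal global covering of M* with respect to κ: a connected combinatorial map K and a covering p : K → M* such that κ∘p is a global G-tension on K, and such that for every connected combinatorial map K' and covering r : K' → M* with κ∘r a global G-tension on K', there exists a covering q : K' → K with p∘q = r. (ii) Conversely, if K is a combinatorial map, p : K → M* a covering, and φ a global G-tension on K that is constant on the fibers of p and whose induced G-labelling κ on M* (defined by κ(p(d')) = φ(d') for darts d' of K) is a local G-tension on M*, then κ is a G-flow on M. -/

import Mathlib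

/-!
The minimal global covering of `M*` is the connected component of `(d₀, 1)` in the derived map
of the voltage assignment `κ` on `M*`: darts `D × G`, vertex permutation `(d, g) ↦ (σα d, g)` and
edge involution `(d, g) ↦ (α d, g κ(d))`. The second coordinate is a potential for `κ ∘ p`, so
`κ ∘ p` is a global tension. Conversely, a global tension `κ ∘ r` on a connected covering `K'` has
a potential `ψ` (the height of a walk from a base vertex depends only on its endpoint), and
`x ↦ (r x, ψ x)` maps `K'` onto that component, compatibly with the projections to `M*`.
Part (ii) holds because `(σα)α = σ`: the faces of `M*` are the vertices of `M`.
-/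

open Equiv

/-- The setoid on darts whose classes are the cycles (orbits) of a permutation. -/
def Equiv.Perm.cycleSetoid {D : Type*} (τ : Equiv.Perm D) : Setoid D :=
  ⟨τ.SameCycle, ⟨fun x => Equiv.Perm.SameCycle.refl τ x, fun h => h.symm, fun h h' => h.trans h'⟩⟩

/-- The number of cycles (orbits) of a permutation. -/
noncomputable def Equiv.Perm.cycleCount {D : Type*} (τ : Equiv.Perm D) : ℕ :=
  Nat.card (Quotient τ.cycleSetoid)

/-- The ordered product of the values of `κ` around the `τ`-orbit of the dart `d`. -/
noncomputable def aroundProd {D G : Type*} [Group G] (τ : Equiv.Perm D) (κ : D → G) (d : D) : G :=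
  ((List.range (Function.minimalPeriod (⇑τ) d)).map fun i => κ ((τ ^ i) d)).prod

/-- A `G`-labelling of a combinatorial map with edge involution `α`. -/
def IsGLabelling {D G : Type*} [Group G] (α : Equiv.Perm D) (κ : D → G) : Prop :=
  ∀ d, κ (α d) = (κ d)⁻¹

/-- A `G`-flow on the combinatorial map `(D, σ, α)`. -/
def IsGFlow {D G : Type*} [Group G] (σ α : Equiv.Perm D) (κ : D → G) : Prop :=
  IsGLabelling α κ ∧ ∀ d, aroundProd σ κ d = 1

/-- A local `G`-tension on the combinatorial map `(D, σ, α)`: the product around every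
face (orbit of `σ ∘ α`) is the identity. -/
def IsLocalTension {D G : Type*} [Group G] (σ α : Equiv.Perm D) (κ : D → G) : Prop :=
  IsGLabelling α κ ∧ ∀ d, aroundProd (σ * α) κ d = 1

/-- A closed walk in the combinatorial map `(D, σ, α)`, as a nonempty list of darts. -/
def IsClosedWalk {D : Type*} (σ α : Equiv.Perm D) (W : List D) : Prop :=
  ∃ h : W ≠ [], W.Chain' (fun a b => σ.SameCycle (α a) b) ∧
    σ.SameCycle (α (W.getLast h)) (W.head h)

/-- A global `G`-tension on the combinatorial map `(D, σ, α)`. -/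
def IsGlobalTension {D G : Type*} [Group G] (σ α : Equiv.Perm D) (κ : D → G) : Prop :=
  IsGLabelling α κ ∧ ∀ W : List D, IsClosedWalk σ α W → (W.map κ).prod = 1

/-- Connectivity of the combinatorial map `(D, σ, α)`: the group generated by `σ` and `α`
acts transitively on the darts. -/
def MapConnected {D : Type*} (σ α : Equiv.Perm D) : Prop :=
  ∀ d d' : D, ∃ g ∈ Subgroup.closure ({σ, α} : Set (Equiv.Perm D)), g d = d'

/-- A covering of combinatorial maps `(D', σ', α') → (D, σ, α)`. -/
def IsMapCovering {D' D : Type*} (σ' α' : Equiv.Perm D') (σ α : Equiv.Perm D)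
    (p : D' → D) : Prop :=
  Function.Surjective p ∧ (∀ d, p (σ' d) = σ (p d)) ∧ (∀ d, p (α' d) = α (p d)) ∧
    ∀ d₁ d₂, σ'.SameCycle d₁ d₂ → p d₁ = p d₂ → d₁ = d₂

open Function

section ClosurePair

variable {A B : Type*} [Group A] [Group B] (a₁ a₂ : A) (b₁ b₂ : B)

theorem map_fst_closure_pair :
    (Subgroup.closure {(a₁, b₁), (a₂, b₂)}).map (MonoidHom.fst A B) =
      Subgroup.closure {a₁, a₂} := by
  rw [MonoidHom.map_closure, Set.image_pair]
  rfl

theorem map_snd_closure_pair :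
    (Subgroup.closure {(a₁, b₁), (a₂, b₂)}).map (MonoidHom.snd A B) =
      Subgroup.closure {b₁, b₂} := by
  rw [MonoidHom.map_closure, Set.image_pair]
  rfl

end ClosurePair

section Semiconj

variable {X Y : Type*}

def semiconjSubgroup (f : X → Y) : Subgroup (Perm X × Perm Y) where
  carrier := {g | Semiconj f g.1 g.2}
  mul_mem' h₁ h₂ := h₁.comp_right h₂
  one_mem' := Semiconj.id_right
  inv_mem' {g} h := h.inverses_right g.1.apply_symm_apply g.2.symm_apply_apply

variable {f : X → Y} {u u₁ u₂ : Perm X} {v v₁ v₂ : Perm Y}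

theorem closure_pair_le_semiconjSubgroup (h₁ : Semiconj f u₁ v₁) (h₂ : Semiconj f u₂ v₂) :
    Subgroup.closure {(u₁, v₁), (u₂, v₂)} ≤ semiconjSubgroup f :=
  (Subgroup.closure_le _).2 <| Set.pair_subset h₁ h₂

theorem exists_semiconj_of_mem_closure_pair_dom (h₁ : Semiconj f u₁ v₁)
    (h₂ : Semiconj f u₂ v₂) {g : Perm X} (hg : g ∈ Subgroup.closure {u₁, u₂}) :
    ∃ h ∈ Subgroup.closure {v₁, v₂}, Semiconj f g h := by
  rw [← map_fst_closure_pair (b₁ := v₁) (b₂ := v₂)] at hg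
  obtain ⟨g', hg', rfl⟩ := hg
  refine ⟨g'.2, ?_, closure_pair_le_semiconjSubgroup h₁ h₂ hg'⟩
  rw [← map_snd_closure_pair (a₁ := u₁) (a₂ := u₂)]
  exact Subgroup.mem_map_of_mem _ hg'

theorem exists_semiconj_of_mem_closure_pair_codom (h₁ : Semiconj f u₁ v₁)
    (h₂ : Semiconj f u₂ v₂) {h : Perm Y} (hh : h ∈ Subgroup.closure {v₁, v₂}) :
    ∃ g ∈ Subgroup.closure {u₁, u₂}, Semiconj f g h := by
  rw [← map_snd_closure_pair (a₁ := u₁) (a₂ := u₂)] at hh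
  obtain ⟨h', hh', rfl⟩ := hh
  refine ⟨h'.1, ?_, closure_pair_le_semiconjSubgroup h₁ h₂ hh'⟩
  rw [← map_fst_closure_pair (b₁ := v₁) (b₂ := v₂)]
  exact Subgroup.mem_map_of_mem _ hh'

theorem Function.Semiconj.perm_zpow (h : Semiconj f u v) (n : ℤ) :
    Semiconj f ⇑(u ^ n) ⇑(v ^ n) :=
  zpow_mem (show (u, v) ∈ semiconjSubgroup f from h) n

theorem Function.Semiconj.sameCycle (h : Semiconj f u v) {x y : X} (hxy : u.SameCycle x y) :
    v.SameCycle (f x) (f y) := by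
  obtain ⟨n, rfl⟩ := hxy
  exact ⟨n, (h.perm_zpow n x).symm⟩

theorem Function.Semiconj.eq_of_sameCycle (h : Semiconj f u id) {x y : X}
    (hxy : u.SameCycle x y) : f x = f y :=
  Perm.sameCycle_one.1 (Semiconj.sameCycle (v := 1) h hxy)

end Semiconj

section Connected

variable {X X' Y : Type*} {σ α : Perm X} {σ' α' : Perm X'}

theorem MapConnected.apply_eq {f : X → Y} (hconn : MapConnected σ α) (hσ : Semiconj f σ id)
    (hα : Semiconj f α id) (x y : X) : f x = f y := by
  obtain ⟨g, hg, rfl⟩ := hconn x y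
  have : g ∈ (semiconjSubgroup f).comap (MonoidHom.inl _ _) :=
    (Subgroup.closure_le _).2 (Set.pair_subset hσ hα) hg
  exact (this x).symm

theorem MapConnected.surjective_of_semiconj [Nonempty X'] {p : X' → X}
    (hconn : MapConnected σ α) (hσ : Semiconj p σ' σ) (hα : Semiconj p α' α) :
    Surjective p := by
  obtain ⟨x'⟩ := ‹Nonempty X'›
  intro y
  obtain ⟨h, hh, rfl⟩ := hconn (p x') y
  obtain ⟨g, -, hg⟩ := exists_semiconj_of_mem_closure_pair_codom hσ hα hh
  exact ⟨g x', hg x'⟩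

theorem MapConnected.mem_orbit_of_semiconj {p : X' → X} (hconn : MapConnected σ' α')
    (hσ : Semiconj p σ' σ) (hα : Semiconj p α' α) (x x' : X') :
    p x ∈ MulAction.orbit (Subgroup.closure {σ, α}) (p x') := by
  obtain ⟨g, hg, rfl⟩ := hconn x' x
  obtain ⟨h, hh, hgh⟩ := exists_semiconj_of_mem_closure_pair_dom hσ hα hg
  exact ⟨⟨h, hh⟩, (hgh x').symm⟩

theorem MapConnected.dual (hconn : MapConnected σ α) : MapConnected (σ * α) α := by
  intro x y
  obtain ⟨g, hg, hgxy⟩ := hconn x y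
  refine ⟨g, (Subgroup.closure_le _).2 (Set.pair_subset ?_ ?_) hg, hgxy⟩
  · simpa using mul_mem (Subgroup.subset_closure (Set.mem_insert (σ * α) {α}))
      (inv_mem (Subgroup.subset_closure (Set.mem_insert_of_mem (σ * α) rfl)))
  · exact Subgroup.subset_closure (Set.mem_insert_of_mem _ rfl)

variable (σ α) (x₀ : X)

abbrev component : Set X := MulAction.orbit (Subgroup.closure {σ, α}) x₀

def componentVertexPerm : Perm (component σ α x₀) :=
  MulAction.toPerm (⟨σ, Subgroup.subset_closure (Set.mem_insert σ {α})⟩ :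
    Subgroup.closure {σ, α})

def componentEdgePerm : Perm (component σ α x₀) :=
  MulAction.toPerm (⟨α, Subgroup.subset_closure (Set.mem_insert_of_mem σ rfl)⟩ :
    Subgroup.closure {σ, α})

theorem mapConnected_component :
    MapConnected (componentVertexPerm σ α x₀) (componentEdgePerm σ α x₀) := by
  rintro ⟨_, a, rfl⟩ ⟨_, b, rfl⟩
  obtain ⟨g, hg, hgb⟩ := exists_semiconj_of_mem_closure_pair_codom (f := Subtype.val)
    (u₁ := componentVertexPerm σ α x₀) (u₂ := componentEdgePerm σ α x₀)
    (fun _ => rfl) (fun _ => rfl) (b * a⁻¹).2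
  refine ⟨g, hg, Subtype.ext ?_⟩
  rw [hgb]
  simp [Subgroup.smul_def]

variable {σ α} in
theorem componentEdgePerm_involutive (hα : Involutive α) :
    Involutive (componentEdgePerm σ α x₀) :=
  fun y => Subtype.ext (hα y)

end Connected

section Walks

variable {X G : Type*} [Group G] {σ α : Perm X}

def vertex (σ : Perm X) (x : X) : Quotient σ.cycleSetoid :=
  Quotient.mk _ x

theorem vertex_eq_vertex_iff {x y : X} : vertex σ x = vertex σ y ↔ σ.SameCycle x y :=
  Quotient.eq

@[simp]
theorem vertex_apply (x : X) : vertex σ (σ x) = vertex σ x :=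
  vertex_eq_vertex_iff.2 (Perm.sameCycle_apply_left.2 .rfl)

variable (σ α) in
inductive IsWalk : Quotient σ.cycleSetoid → Quotient σ.cycleSetoid → List X → Prop
  | single (x : X) : IsWalk (vertex σ x) (vertex σ (α x)) [x]
  | cons (x : X) {w : Quotient σ.cycleSetoid} {W : List X} :
      IsWalk (vertex σ (α x)) w W → IsWalk (vertex σ x) w (x :: W)

theorem IsWalk.append {u v w : Quotient σ.cycleSetoid} {W W' : List X}
    (h : IsWalk σ α u v W) (h' : IsWalk σ α v w W') : IsWalk σ α u w (W ++ W') := by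
  induction h with
  | single x => exact .cons x h'
  | cons x _ ih => exact .cons x (ih h')

theorem IsWalk.ne_nil {v w : Quotient σ.cycleSetoid} {W : List X} (h : IsWalk σ α v w W) :
    W ≠ [] := by
  cases h <;> simp

theorem isWalk_cons_iff {x : X} {W : List X} {v w : Quotient σ.cycleSetoid} :
    IsWalk σ α v w (x :: W) ↔ v = vertex σ x ∧ (x :: W).IsChain (fun a b => σ.SameCycle (α a) b) ∧
      vertex σ (α ((x :: W).getLast (List.cons_ne_nil x W))) = w := by
  induction W generalizing x v with
  | nil =>
    constructor
    · rintro (_ | ⟨_, h⟩)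
      · exact ⟨rfl, .singleton x, rfl⟩
      · exact absurd rfl h.ne_nil
    · rintro ⟨rfl, -, rfl⟩
      exact .single x
  | cons y W ih =>
    rw [List.isChain_cons_cons, List.getLast_cons_cons, ← vertex_eq_vertex_iff]
    constructor
    · rintro (_ | ⟨_, h⟩)
      obtain ⟨hy, hc, hw⟩ := ih.1 h
      exact ⟨rfl, ⟨hy, hc⟩, hw⟩
    · rintro ⟨rfl, ⟨hy, hc⟩, hw⟩
      exact .cons x (ih.2 ⟨hy, hc, hw⟩)

theorem isClosedWalk_iff_exists_isWalk {W : List X} :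
    IsClosedWalk σ α W ↔ ∃ v, IsWalk σ α v v W := by
  cases W with
  | nil => simpa [IsClosedWalk] using fun _ h => h.ne_nil rfl
  | cons x W =>
    simp only [IsClosedWalk, isWalk_cons_iff, ← vertex_eq_vertex_iff, exists_eq_left]
    exact ⟨fun ⟨_, h⟩ => h, fun h => ⟨List.cons_ne_nil x W, h⟩⟩

theorem MapConnected.exists_isWalk (hconn : MapConnected σ α) (hα : Involutive α)
    (v w : Quotient σ.cycleSetoid) : ∃ W, IsWalk σ α v w W := by
  induction v, w using Quotient.inductionOn₂ with | h a b => ?_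
  let Reachable (x : X) : Prop := ∃ W, IsWalk σ α (vertex σ a) (vertex σ x) W
  have reachable_edge (x : X) : Reachable (α x) = Reachable x := by
    refine propext ⟨fun ⟨W, hW⟩ => ⟨W ++ [α x], ?_⟩,
      fun ⟨W, hW⟩ => ⟨W ++ [x], hW.append (.single x)⟩⟩
    simpa [hα x] using hW.append (.single (α x))
  have : Reachable b = Reachable a :=
    hconn.apply_eq (fun x => by simp [Reachable]) reachable_edge b a
  change Reachable b
  rw [this, ← reachable_edge]
  exact ⟨[a], .single a⟩

def IsPotential (σ α : Perm X) (φ : X → G) (θ : Quotient σ.cycleSetoid → G) : Prop :=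
  ∀ x, θ (vertex σ (α x)) = θ (vertex σ x) * φ x

variable {φ : X → G} {θ : Quotient σ.cycleSetoid → G}

theorem IsPotential.mul_prod_eq (hθ : IsPotential σ α φ θ) {v w : Quotient σ.cycleSetoid}
    {W : List X} (hW : IsWalk σ α v w W) : θ v * (W.map φ).prod = θ w := by
  induction hW with
  | single x => simp [hθ x]
  | cons x _ ih => rw [List.map_cons, List.prod_cons, ← mul_assoc, ← hθ x, ih]

theorem IsPotential.isGlobalTension (hφ : IsGLabelling α φ) (hθ : IsPotential σ α φ θ) :
    IsGlobalTension σ α φ := by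
  refine ⟨hφ, fun W hW => ?_⟩
  obtain ⟨v, hv⟩ := isClosedWalk_iff_exists_isWalk.1 hW
  simpa using hθ.mul_prod_eq hv

theorem IsGlobalTension.exists_isPotential (hφ : IsGlobalTension σ α φ) (hconn : MapConnected σ α)
    (hα : Involutive α) (v₀ : Quotient σ.cycleSetoid) : ∃ θ, IsPotential σ α φ θ ∧ θ v₀ = 1 := by
  choose W hW using hconn.exists_isWalk hα v₀
  have height_eq {v : Quotient σ.cycleSetoid} {V : List X} (hV : IsWalk σ α v₀ v V) :
      (V.map φ).prod = ((W v).map φ).prod := by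
    obtain ⟨U, hU⟩ := hconn.exists_isWalk hα v v₀
    have h₁ := hφ.2 _ (isClosedWalk_iff_exists_isWalk.2 ⟨_, hV.append hU⟩)
    have h₂ := hφ.2 _ (isClosedWalk_iff_exists_isWalk.2 ⟨_, (hW v).append hU⟩)
    rw [List.map_append, List.prod_append] at h₁ h₂
    exact mul_right_cancel (h₁.trans h₂.symm)
  refine ⟨fun v => ((W v).map φ).prod, fun x => ?_, ?_⟩
  · beta_reduce
    rw [← height_eq ((hW _).append (.single x))]
    simp
  · obtain ⟨a, rfl⟩ : ∃ a, vertex σ a = v₀ := Quotient.exists_rep v₀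
    have hloop : IsWalk σ α (vertex σ a) (vertex σ a) [a, α a] :=
      .cons a (by simpa [hα a] using IsWalk.single (σ := σ) (α := α) (α a))
    beta_reduce
    rw [← height_eq hloop]
    simp [hφ.1 a]

end Walks

section Derived

variable {D G : Type*} [Group G] (σ α : Perm D) (κ : D → G) (d₀ : D)

variable (G) in
def derivedVertexPerm : Perm (D × G) :=
  σ.prodCongr (Equiv.refl G)

def derivedEdgePerm : Perm (D × G) :=
  α.prodShear fun d => Equiv.mulRight (κ d)

abbrev derivedComponent : Set (D × G) :=
  component (derivedVertexPerm G σ) (derivedEdgePerm α κ) (d₀, 1)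

abbrev derivedComponentVertexPerm : Perm (derivedComponent σ α κ d₀) :=
  componentVertexPerm (derivedVertexPerm G σ) (derivedEdgePerm α κ) (d₀, 1)

abbrev derivedComponentEdgePerm : Perm (derivedComponent σ α κ d₀) :=
  componentEdgePerm (derivedVertexPerm G σ) (derivedEdgePerm α κ) (d₀, 1)

variable {σ α κ}

theorem derivedEdgePerm_involutive (hα : Involutive α) (hκ : IsGLabelling α κ) :
    Involutive (derivedEdgePerm α κ) := by
  rintro ⟨d, g⟩
  simp [derivedEdgePerm, hα d, hκ d]

theorem derivedComponentEdgePerm_apply_ne (hα : ∀ d, α d ≠ d) (y : derivedComponent σ α κ d₀) :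
    derivedComponentEdgePerm σ α κ d₀ y ≠ y :=
  fun h => hα y.1.1 (congrArg (fun z : derivedComponent σ α κ d₀ => z.1.1) h)

theorem isMapCovering_derivedComponent_fst (hconn : MapConnected σ α) :
    IsMapCovering (derivedComponentVertexPerm σ α κ d₀) (derivedComponentEdgePerm σ α κ d₀) σ α
      fun y => y.1.1 := by
  have : Nonempty (derivedComponent σ α κ d₀) := ⟨⟨_, MulAction.mem_orbit_self _⟩⟩
  refine ⟨hconn.surjective_of_semiconj (σ' := derivedComponentVertexPerm σ α κ d₀)
    (α' := derivedComponentEdgePerm σ α κ d₀) (fun _ => rfl) (fun _ => rfl), fun _ => rfl,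
    fun _ => rfl, fun y z hyz h => Subtype.ext (Prod.ext h ?_)⟩
  exact Semiconj.eq_of_sameCycle (f := fun y : derivedComponent σ α κ d₀ => y.1.2)
    (fun _ => rfl) hyz

theorem isGlobalTension_derivedComponent_fst (hκ : IsGLabelling α κ) :
    IsGlobalTension (derivedComponentVertexPerm σ α κ d₀) (derivedComponentEdgePerm σ α κ d₀)
      (κ ∘ fun y => y.1.1) :=
  IsPotential.isGlobalTension (fun y => hκ y.1.1)
    (θ := Quotient.lift (fun y => y.1.2) fun _ _ h =>
      Semiconj.eq_of_sameCycle (f := fun y : derivedComponent σ α κ d₀ => y.1.2) (fun _ => rfl) h)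
    fun _ => rfl

theorem exists_isMapCovering_derivedComponent {X : Type*} {σ' α' : Perm X}
    (hα' : Involutive α') (hconn' : MapConnected σ' α') {r : X → D}
    (hr : IsMapCovering σ' α' σ α r) (hκr : IsGlobalTension σ' α' (κ ∘ r)) :
    ∃ q : X → derivedComponent σ α κ d₀,
      IsMapCovering σ' α' (derivedComponentVertexPerm σ α κ d₀)
        (derivedComponentEdgePerm σ α κ d₀) q ∧ (fun y => y.1.1) ∘ q = r := by
  obtain ⟨x₀, hx₀⟩ := hr.1 d₀
  obtain ⟨ψ, hψ, hψx₀⟩ := hκr.exists_isPotential hconn' hα' (vertex σ' x₀)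
  let q₀ (x : X) : D × G := (r x, ψ (vertex σ' x))
  have hσ : Semiconj q₀ σ' (derivedVertexPerm G σ) :=
    fun x => Prod.ext (hr.2.1 x) (congrArg ψ (vertex_apply x))
  have hα : Semiconj q₀ α' (derivedEdgePerm α κ) := fun x => Prod.ext (hr.2.2.1 x) (hψ x)
  have hq₀ (x : X) : q₀ x ∈ derivedComponent σ α κ d₀ := by
    simpa [q₀, hx₀, hψx₀] using hconn'.mem_orbit_of_semiconj hσ hα x x₀
  have : Nonempty X := ⟨x₀⟩
  refine ⟨fun x => ⟨q₀ x, hq₀ x⟩, ⟨?_, fun x => Subtype.ext (hσ x), fun x => Subtype.ext (hα x),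
    fun x y hxy h => hr.2.2.2 x y hxy (congrArg (fun z : derivedComponent σ α κ d₀ => z.1.1) h)⟩,
    rfl⟩
  exact (mapConnected_component _ _ _).surjective_of_semiconj (fun x => Subtype.ext (hσ x))
    (fun x => Subtype.ext (hα x))

end Derived

theorem isGFlow_of_isLocalTension_dual {D G : Type*} [Group G] {σ α : Perm D} {κ : D → G}
    (hα : Involutive α) (h : IsLocalTension (σ * α) α κ) : IsGFlow σ α κ := by
  have hdual : σ * α * α = σ := by
    rw [mul_assoc, show α * α = 1 from Perm.ext hα, mul_one]
  exact ⟨h.1, hdual ▸ h.2⟩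

/-- Duality between `G`-flows on a connected combinatorial map `M = (D, σ, α)` and minimal
global covering tensions on the dual map `M* = (D, σ∘α, α)`.
(i) Every `G`-flow `κ` on `M` admits a minimal global covering of `M*` with respect to `κ`.
(ii) Conversely, a global `G`-tension on a covering of `M*` that is constant on fibers and
induces a local `G`-tension on `M*` induces a `G`-flow on `M`. -/
theorem flow_minimal_global_covering_tension_duality
    {D : Type} [Fintype D] [Nonempty D] (σ α : Equiv.Perm D)
    (hinv : ∀ d, α (α d) = d) (hfpf : ∀ d, α d ≠ d)
    (hconn : MapConnected σ α)
    {G : Type} [Group G] [Fintype G] :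
    (∀ κ : D → G, IsGFlow σ α κ →
      ∃ (DK : Type) (_ : Fintype DK) (σK αK : Equiv.Perm DK),
        (∀ d, αK (αK d) = d) ∧ (∀ d, αK d ≠ d) ∧ MapConnected σK αK ∧
        ∃ p : DK → D, IsMapCovering σK αK (σ * α) α p ∧
          IsGlobalTension σK αK (κ ∘ p) ∧
          ∀ (DK' : Type) (_ : Fintype DK') (σK' αK' : Equiv.Perm DK'),
            (∀ d, αK' (αK' d) = d) → (∀ d, αK' d ≠ d) → MapConnected σK' αK' →
            ∀ r : DK' → D, IsMapCovering σK' αK' (σ * α) α r →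
              IsGlobalTension σK' αK' (κ ∘ r) →
              ∃ q : DK' → DK, IsMapCovering σK' αK' σK αK q ∧ p ∘ q = r) ∧
    (∀ (DK : Type) (_ : Fintype DK) (σK αK : Equiv.Perm DK),
      (∀ d, αK (αK d) = d) → (∀ d, αK d ≠ d) →
      ∀ p : DK → D, IsMapCovering σK αK (σ * α) α p →
      ∀ φ : DK → G, IsGlobalTension σK αK φ →
        (∀ d₁ d₂, p d₁ = p d₂ → φ d₁ = φ d₂) →
        ∀ κ : D → G, (∀ d', κ (p d') = φ d') → IsLocalTension (σ * α) α κ →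
          IsGFlow σ α κ) := by
  refine ⟨fun κ hκ => ?_, fun _ _ _ _ _ _ _ _ _ _ _ _ _ hloc =>
    isGFlow_of_isLocalTension_dual hinv hloc⟩
  obtain ⟨d₀⟩ := ‹Nonempty D›
  exact ⟨derivedComponent (σ * α) α κ d₀, Fintype.ofFinite _, _, _,
    componentEdgePerm_involutive _ (derivedEdgePerm_involutive hinv hκ.1),
    derivedComponentEdgePerm_apply_ne d₀ hfpf, mapConnected_component _ _ _, _,
    isMapCovering_derivedComponent_fst d₀ hconn.dual,
    isGlobalTension_derivedComponent_fst d₀ hκ.1,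
    fun _ _ _ _ hinv' _ hconn' _ hr hκr =>
      exists_isMapCovering_derivedComponent d₀ hinv' hconn' hr hκr⟩
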